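/- Under the urn model setup, for each j ∈ {1,…,d0} one has N_{n,j} → ∞ almost surely as n → ∞. -/

import Mathlib

open MeasureTheory ProbabilityTheory Filter

/-!
Write `N n j = a j + f n` with `f n = ∑_{k ≤ n} X k j * A k j`. The process `f` is increasing
with increments in `[0, β]`, so by Lévy's conditional Borel–Cantelli lemma `f n → ∞` almost surely
as soon as its compensator `∑ₙ E[X (n+1) j * A (n+1) j | G n]` diverges. Since the reinforcement
`A (n+1)` is independent of the past and of the draw, that conditional increment equals
`E[A (n+1) j] * Z n j`. The mean tends to `m > λ₀ ≥ 0`, and `Z n j ≥ C / (n + 1)` because the urn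
starts from positive weights and gains at most `d β` per step, so the compensator dominates a
harmonic series.
-/

theorem limsup_nonneg_of_eventually_mem_Icc {u : ℕ → ℝ} {β : ℝ}
    (hu : ∀ᶠ n in atTop, u n ∈ Set.Icc 0 β) : 0 ≤ limsup u atTop :=
  le_limsup_of_frequently_le (hu.mono fun _ hn => hn.1).frequently
    (isBoundedUnder_of_eventually_le (hu.mono fun _ hn => hn.2))

theorem not_summable_const_div_succ {c : ℝ} (hc : c ≠ 0) :
    ¬ Summable fun n : ℕ => c / (n + 1) := by
  simp_rw [div_eq_mul_one_div c, summable_mul_left_iff hc]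
  have := (summable_nat_add_iff 1).not.2 Real.not_summable_one_div_natCast
  exact_mod_cast this

theorem mul_mem_Icc_of_eq_zero_or_one {x y β : ℝ} (hx : x = 0 ∨ x = 1) (hy : y ∈ Set.Icc 0 β) :
    x * y ∈ Set.Icc 0 β := by
  rcases hx with rfl | rfl
  · simpa using hy.1.trans hy.2
  · simpa using hy

theorem div_le_div_sum_of_mem_Icc {ι : Type*} {s : Finset ι} {a x : ι → ℝ} {t : ℝ} {j : ι}
    (hj : j ∈ s) (ha : ∀ i ∈ s, 0 < a i) (hx : ∀ i ∈ s, x i ∈ Set.Icc (a i) (a i + t)) :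
    a j / (∑ i ∈ s, a i + s.card * t) ≤ x j / ∑ i ∈ s, x i := by
  have hsum : ∑ i ∈ s, x i ≤ ∑ i ∈ s, a i + s.card * t := by
    simpa [Finset.sum_add_distrib] using Finset.sum_le_sum fun i hi => (hx i hi).2
  exact div_le_div₀ ((ha j hj).le.trans (hx j hj).1) (hx j hj).1
    (Finset.sum_pos (fun i hi => (ha i hi).trans_le (hx i hi).1) ⟨j, hj⟩) hsum

theorem sum_mem_Icc_card_mul {ι : Type*} {s : Finset ι} {f : ι → ℝ} {β : ℝ}
    (hf : ∀ i ∈ s, f i ∈ Set.Icc 0 β) : ∑ i ∈ s, f i ∈ Set.Icc 0 (s.card * β) :=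
  ⟨Finset.sum_nonneg fun i hi => (hf i hi).1,
    by simpa using Finset.sum_le_card_nsmul s f β fun i hi => (hf i hi).2⟩

section Probability

variable {Ω : Type*} {m0 : MeasurableSpace Ω} {μ : Measure Ω}

theorem ae_tendsto_atTop_of_le_condExp_sub [IsFiniteMeasure μ] {ℱ : Filtration ℕ m0}
    {f : ℕ → Ω → ℝ} {R : NNReal} {b : ℕ → ℝ}
    (hfmono : ∀ᵐ ω ∂μ, ∀ n, f n ω ≤ f (n + 1) ω) (hf : StronglyAdapted ℱ f)
    (hint : ∀ n, Integrable (f n) μ) (hbdd : ∀ᵐ ω ∂μ, ∀ n, |f (n + 1) ω - f n ω| ≤ R)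
    (hb0 : ∀ n, 0 ≤ b n) (hb : ¬ Summable b)
    (hle : ∀ᵐ ω ∂μ, ∀ᶠ n in atTop, b n ≤ μ[f (n + 1) - f n | ℱ n] ω) :
    ∀ᵐ ω ∂μ, Tendsto (fun n => f n ω) atTop atTop := by
  have hnonneg : ∀ᵐ ω ∂μ, ∀ n, 0 ≤ μ[f (n + 1) - f n | ℱ n] ω :=
    ae_all_iff.2 fun n => condExp_nonneg <| by
      filter_upwards [hfmono] with ω hω using sub_nonneg.2 (hω n)
  filter_upwards [tendsto_sum_indicator_atTop_iff hfmono hf hint hbdd, hnonneg, hle]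
    with ω hiff hω0 hωle
  refine hiff.2 ?_
  simp only [predictablePart, Finset.sum_apply]
  refine (not_summable_iff_tendsto_nat_atTop_of_nonneg hω0).1 fun hs => hb ?_
  exact hs.of_norm_bounded_eventually_nat <| hωle.mono fun n hn => by
    rwa [Real.norm_of_nonneg (hb0 n)]

theorem condExp_mul_indep_eq_integral_smul [IsFiniteMeasure μ] {m₁ m₂ mA : MeasurableSpace Ω}
    (h₁₂ : m₁ ≤ m₂) (h₂ : m₂ ≤ m0) (hA : mA ≤ m0) (hind : Indep mA m₂ μ) {x a : Ω → ℝ} {C : ℝ}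
    (hx : StronglyMeasurable[m₂] x) (hxC : ∀ᵐ ω ∂μ, ‖x ω‖ ≤ C)
    (ha : StronglyMeasurable[mA] a) (hai : Integrable a μ) :
    μ[x * a | m₁] =ᵐ[μ] μ[a] • μ[x | m₁] := by
  have hpull : μ[x * a | m₂] =ᵐ[μ] μ[a] • x := by
    filter_upwards [condExp_stronglyMeasurable_mul_of_bound h₂ hx hai C hxC,
      condExp_indep_eq hA h₂ ha hind] with ω h₁ h₂
    simp [h₁, h₂, mul_comm]
  exact (condExp_condExp_of_le h₁₂ h₂).symm.trans
    ((condExp_congr_ae hpull).trans (condExp_smul _ _ _))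

theorem measurable_of_mem_biSup_comap {ι β : Type*} [mβ : MeasurableSpace β] {m : MeasurableSpace Ω}
    {Y : ι → Ω → β} {s : Finset ι} {i : ι} (hi : i ∈ s)
    (hm : (⨆ j ∈ s, MeasurableSpace.comap (Y j) mβ) ≤ m) : Measurable[m] (Y i) :=
  Measurable.of_comap_le <| (le_iSup₂ (f := fun j (_ : j ∈ s) => MeasurableSpace.comap (Y j) mβ)
    i hi).trans hm

theorem biSup_comap_le {ι β : Type*} [mβ : MeasurableSpace β] {Y : ι → Ω → β} {s : Finset ι}
    (hY : ∀ i, Measurable (Y i)) : (⨆ i ∈ s, MeasurableSpace.comap (Y i) mβ) ≤ m0 :=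
  iSup₂_le fun i _ => (hY i).comap_le

def Filtration.ofSteps (M : ℕ → MeasurableSpace Ω) (hM : ∀ k, M k ≤ m0) : Filtration ℕ m0 where
  seq n := ⨆ k ∈ Finset.Icc 1 n, M k
  mono' _ _ hnp := biSup_mono fun _ hk => Finset.Icc_subset_Icc_right hnp hk
  le' _ := iSup₂_le fun k _ => hM k

theorem Filtration.le_ofSteps {M : ℕ → MeasurableSpace Ω} {hM : ∀ k, M k ≤ m0} {k n : ℕ}
    (hk : k ∈ Finset.Icc 1 n) : M k ≤ Filtration.ofSteps M hM n :=
  le_iSup₂ (f := fun k (_ : k ∈ Finset.Icc 1 n) => M k) k hk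

theorem integrable_of_forall_mem_Icc [IsFiniteMeasure μ] {f : Ω → ℝ} {l u : ℝ}
    (hf : Measurable f) (hfI : ∀ ω, f ω ∈ Set.Icc l u) : Integrable f μ :=
  .of_bound hf.aestronglyMeasurable (max |l| |u|)
    (ae_of_all _ fun ω => abs_le_max_abs_abs (hfI ω).1 (hfI ω).2)

theorem integral_mem_Icc_of_forall_mem_Icc [IsProbabilityMeasure μ] {f : Ω → ℝ} {l u : ℝ}
    (hf : Measurable f) (hfI : ∀ ω, f ω ∈ Set.Icc l u) : ∫ ω, f ω ∂μ ∈ Set.Icc l u := by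
  have hint : Integrable f μ := integrable_of_forall_mem_Icc hf hfI
  constructor
  · simpa using integral_mono (integrable_const l) hint fun ω => (hfI ω).1
  · simpa using integral_mono hint (integrable_const u) fun ω => (hfI ω).2

theorem ae_tendsto_sum_Icc_atTop_of_le_condExp [IsFiniteMeasure μ] {ℱ : Filtration ℕ m0}
    {g : ℕ → Ω → ℝ} {β : ℝ} {b : ℕ → ℝ} (hg : ∀ k, Measurable (g k))
    (hgβ : ∀ k, 1 ≤ k → ∀ ω, g k ω ∈ Set.Icc 0 β)
    (hadp : StronglyAdapted ℱ fun n ω => ∑ k ∈ Finset.Icc 1 n, g k ω)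
    (hb0 : ∀ n, 0 ≤ b n) (hb : ¬ Summable b)
    (hle : ∀ᵐ ω ∂μ, ∀ᶠ n in atTop, b n ≤ μ[g (n + 1) | ℱ n] ω) :
    ∀ᵐ ω ∂μ, Tendsto (fun n => ∑ k ∈ Finset.Icc 1 n, g k ω) atTop atTop := by
  have hinc : ∀ n ω, ∑ k ∈ Finset.Icc 1 (n + 1), g k ω - ∑ k ∈ Finset.Icc 1 n, g k ω =
      g (n + 1) ω := fun n ω => by
    rw [Finset.sum_Icc_succ_top (Nat.le_add_left 1 n), add_sub_cancel_left]
  refine ae_tendsto_atTop_of_le_condExp_sub (R := β.toNNReal) ?_ hadp ?_ ?_ hb0 hb ?_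
  · exact .of_forall fun ω n => sub_nonneg.1 <| (hinc n ω).symm ▸ (hgβ _ n.succ_pos ω).1
  · exact fun n => integrable_finsetSum _ fun k hk =>
      integrable_of_forall_mem_Icc (hg k) (hgβ k (Finset.mem_Icc.1 hk).1)
  · refine .of_forall fun ω n => ?_
    rw [hinc, abs_of_nonneg (hgβ _ n.succ_pos ω).1]
    exact (hgβ _ n.succ_pos ω).2.trans (Real.le_coe_toNNReal β)
  · have hsub : ∀ n, (fun ω => ∑ k ∈ Finset.Icc 1 (n + 1), g k ω) -
        (fun ω => ∑ k ∈ Finset.Icc 1 n, g k ω) = g (n + 1) := fun n => funext (hinc n)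
    simpa only [hsub] using hle

end Probability

section Urn

variable {Ω : Type*} {m0 : MeasurableSpace Ω} {μ : Measure Ω} {X A : ℕ → ℕ → Ω → ℝ} {d : ℕ}

abbrev urnStep (X A : ℕ → ℕ → Ω → ℝ) (d k : ℕ) : MeasurableSpace Ω :=
  ⨆ j ∈ Finset.Icc 1 d, (MeasurableSpace.comap (X k j) Real.measurableSpace ⊔
    MeasurableSpace.comap (A k j) Real.measurableSpace)

theorem urnStep_le (hX : ∀ n j, Measurable (X n j)) (hA : ∀ n j, Measurable (A n j)) (k : ℕ) :
    urnStep X A d k ≤ m0 :=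
  iSup₂_le fun j _ => sup_le (hX k j).comap_le (hA k j).comap_le

theorem comap_le_urnStep {k j : ℕ} (hj : j ∈ Finset.Icc 1 d) :
    MeasurableSpace.comap (X k j) Real.measurableSpace ⊔
      MeasurableSpace.comap (A k j) Real.measurableSpace ≤ urnStep X A d k :=
  le_iSup₂ (f := fun j (_ : j ∈ Finset.Icc 1 d) =>
    MeasurableSpace.comap (X k j) Real.measurableSpace ⊔
      MeasurableSpace.comap (A k j) Real.measurableSpace) j hj

theorem eq_ofSteps_urnStep {G : ℕ → MeasurableSpace Ω} (hG0 : G 0 = ⊥)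
    (hG : ∀ n, 1 ≤ n → G n = ⨆ k ∈ Finset.Icc 1 n, ⨆ j ∈ Finset.Icc 1 d,
      (MeasurableSpace.comap (X k j) Real.measurableSpace ⊔
        MeasurableSpace.comap (A k j) Real.measurableSpace))
    (hX : ∀ n j, Measurable (X n j)) (hA : ∀ n j, Measurable (A n j)) :
    G = Filtration.ofSteps (urnStep X A d) (urnStep_le hX hA) := by
  funext n
  rcases n with _ | n
  · simp only [hG0, Filtration.ofSteps, Finset.Icc_eq_empty_of_lt one_pos,
      Finset.notMem_empty, iSup_false, iSup_bot]
  · exact hG _ n.succ_pos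

theorem stronglyAdapted_sum_mul (hM : ∀ k, urnStep X A d k ≤ m0) {j : ℕ}
    (hj : j ∈ Finset.Icc 1 d) :
    StronglyAdapted (Filtration.ofSteps (urnStep X A d) hM)
      fun n ω => ∑ k ∈ Finset.Icc 1 n, X k j ω * A k j ω := fun _ =>
  Finset.stronglyMeasurable_fun_sum _ fun _ hk =>
    have hle := (comap_le_urnStep hj).trans (Filtration.le_ofSteps (hM := hM) hk)
    ((Measurable.of_comap_le (le_sup_left.trans hle)).mul
      (Measurable.of_comap_le (le_sup_right.trans hle))).stronglyMeasurable

theorem condExp_mul_eq_integral_smul_condExp [IsFiniteMeasure μ] {G : MeasurableSpace Ω}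
    (hG : G ≤ m0) (hX : ∀ n j, Measurable[m0] (X n j)) (hA : ∀ n j, Measurable[m0] (A n j))
    {n j : ℕ} (hj : j ∈ Finset.Icc 1 d) {β : ℝ} (hX01 : ∀ ω, X n j ω = 0 ∨ X n j ω = 1)
    (hAbd : ∀ ω, A n j ω ∈ Set.Icc 0 β)
    (hind : Indep (⨆ i ∈ Finset.Icc 1 d, MeasurableSpace.comap (A n i) Real.measurableSpace)
      (G ⊔ ⨆ i ∈ Finset.Icc 1 d, MeasurableSpace.comap (X n i) Real.measurableSpace) μ) :
    μ[X n j * A n j | G] =ᵐ[μ] μ[A n j] • μ[X n j | G] :=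
  condExp_mul_indep_eq_integral_smul le_sup_left (sup_le hG (biSup_comap_le (hX n)))
    (biSup_comap_le (hA n)) hind
    (measurable_of_mem_biSup_comap hj le_sup_right).stronglyMeasurable
    (C := 1) (ae_of_all _ fun ω => by rcases hX01 ω with h | h <;> simp [h])
    (measurable_of_mem_biSup_comap hj le_rfl).stronglyMeasurable
    (integrable_of_forall_mem_Icc (hA n j) hAbd)

theorem div_le_urn_share {β : ℝ} {a : ℕ → ℝ} {N : ℕ → ℕ → Ω → ℝ}
    (hX01 : ∀ n, 1 ≤ n → ∀ j ∈ Finset.Icc 1 d, ∀ ω, X n j ω = 0 ∨ X n j ω = 1)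
    (hAbd : ∀ n, 1 ≤ n → ∀ j ∈ Finset.Icc 1 d, ∀ ω, 0 ≤ A n j ω ∧ A n j ω ≤ β)
    (ha : ∀ j ∈ Finset.Icc 1 d, 0 < a j)
    (hN : ∀ n j ω, N n j ω = a j + ∑ k ∈ Finset.Icc 1 n, X k j ω * A k j ω)
    {j : ℕ} (hj : j ∈ Finset.Icc 1 d) (n : ℕ) (ω : Ω) :
    a j / (∑ i ∈ Finset.Icc 1 d, a i + d * β) / (n + 1) ≤
      N n j ω / ∑ i ∈ Finset.Icc 1 d, N n i ω := by
  have hβ : 0 ≤ β := (hAbd 1 le_rfl j hj ω).1.trans (hAbd 1 le_rfl j hj ω).2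
  have hNmem : ∀ i ∈ Finset.Icc 1 d, N n i ω ∈ Set.Icc (a i) (a i + n * β) := fun i hi => by
    have := sum_mem_Icc_card_mul (s := Finset.Icc 1 n) fun k hk =>
      mul_mem_Icc_of_eq_zero_or_one (hX01 k (Finset.mem_Icc.1 hk).1 i hi ω)
        (hAbd k (Finset.mem_Icc.1 hk).1 i hi ω)
    rw [Nat.card_Icc, Nat.add_sub_cancel] at this
    rw [hN]
    exact ⟨by linarith [this.1], by linarith [this.2]⟩
  have hsum : 0 < ∑ i ∈ Finset.Icc 1 d, a i := Finset.sum_pos ha ⟨j, hj⟩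
  calc a j / (∑ i ∈ Finset.Icc 1 d, a i + d * β) / (n + 1)
      = a j / ((∑ i ∈ Finset.Icc 1 d, a i + d * β) * (n + 1)) := div_div _ _ _
    _ ≤ a j / (∑ i ∈ Finset.Icc 1 d, a i + (Finset.Icc 1 d).card * (n * β)) := by
      refine div_le_div_of_nonneg_left (ha j hj).le (by positivity) ?_
      rw [Nat.card_Icc, Nat.add_sub_cancel]
      nlinarith [mul_nonneg (Nat.cast_nonneg (α := ℝ) d) hβ, Nat.cast_nonneg (α := ℝ) n]
    _ ≤ N n j ω / ∑ i ∈ Finset.Icc 1 d, N n i ω := div_le_div_sum_of_mem_Icc hj ha hNmem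

theorem ae_tendsto_urn_count_atTop [IsProbabilityMeasure μ] {β : ℝ} {a : ℕ → ℝ}
    (hXmeas : ∀ n j, Measurable (X n j)) (hAmeas : ∀ n j, Measurable (A n j))
    (hX01 : ∀ n, 1 ≤ n → ∀ j ∈ Finset.Icc 1 d, ∀ ω, X n j ω = 0 ∨ X n j ω = 1)
    (hAbd : ∀ n, 1 ≤ n → ∀ j ∈ Finset.Icc 1 d, ∀ ω, 0 ≤ A n j ω ∧ A n j ω ≤ β)
    (ha : ∀ j ∈ Finset.Icc 1 d, 0 < a j)
    {G : ℕ → MeasurableSpace Ω} (hG0 : G 0 = ⊥)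
    (hG : ∀ n, 1 ≤ n → G n = ⨆ k ∈ Finset.Icc 1 n, ⨆ j ∈ Finset.Icc 1 d,
        (MeasurableSpace.comap (X k j) Real.measurableSpace ⊔
         MeasurableSpace.comap (A k j) Real.measurableSpace))
    (hindep : ∀ n, 1 ≤ n → Indep
        (⨆ j ∈ Finset.Icc 1 d, MeasurableSpace.comap (A n j) Real.measurableSpace)
        (G (n - 1) ⊔ ⨆ j ∈ Finset.Icc 1 d, MeasurableSpace.comap (X n j) Real.measurableSpace) μ)
    {N Z : ℕ → ℕ → Ω → ℝ}
    (hN : ∀ n j ω, N n j ω = a j + ∑ k ∈ Finset.Icc 1 n, X k j ω * A k j ω)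
    (hZ : ∀ n j ω, Z n j ω = N n j ω / ∑ i ∈ Finset.Icc 1 d, N n i ω)
    (hZcond : ∀ n, ∀ j ∈ Finset.Icc 1 d, Z n j =ᵐ[μ] μ[X (n + 1) j | G n])
    {j : ℕ} (hj : j ∈ Finset.Icc 1 d) {c : ℝ} (hc : 0 < c)
    (hmean : ∀ᶠ n in atTop, c ≤ ∫ ω, A n j ω ∂μ) :
    ∀ᵐ ω ∂μ, Tendsto (fun n => N n j ω) atTop atTop := by
  obtain rfl := eq_ofSteps_urnStep hG0 hG hXmeas hAmeas
  have hXA : ∀ k, 1 ≤ k → ∀ ω, X k j ω * A k j ω ∈ Set.Icc 0 β := fun k hk ω =>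
    mul_mem_Icc_of_eq_zero_or_one (hX01 k hk j hj ω) (hAbd k hk j hj ω)
  set C := a j / (∑ i ∈ Finset.Icc 1 d, a i + d * β)
  have hC : 0 < C := by
    obtain ⟨ω⟩ := nonempty_of_isProbabilityMeasure μ
    have hβ : 0 ≤ β := (hAbd 1 le_rfl j hj ω).1.trans (hAbd 1 le_rfl j hj ω).2
    have hsum : 0 < ∑ i ∈ Finset.Icc 1 d, a i := Finset.sum_pos ha ⟨j, hj⟩
    exact div_pos (ha j hj) (by positivity)
  have hf := ae_tendsto_sum_Icc_atTop_of_le_condExp (μ := μ) (g := fun k => X k j * A k j)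
    (b := fun n => c * (C / (n + 1))) (fun k => (hXmeas k j).mul (hAmeas k j)) hXA
    (stronglyAdapted_sum_mul (urnStep_le hXmeas hAmeas) hj) (fun n => by positivity)
    (by rw [summable_mul_left_iff hc.ne']; exact not_summable_const_div_succ hC.ne') ?_
  · filter_upwards [hf] with ω hω
    simpa [hN] using tendsto_atTop_add_const_left _ (a j) hω
  have hcond := fun n : ℕ => condExp_mul_eq_integral_smul_condExp (Filtration.le _ n) hXmeas
    hAmeas hj (hX01 _ n.succ_pos j hj) (hAbd _ n.succ_pos j hj) (hindep _ n.succ_pos)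
  filter_upwards [ae_all_iff.2 hcond, ae_all_iff.2 fun n => hZcond n j hj] with ω hω hZω
  filter_upwards [(tendsto_add_atTop_nat 1).eventually hmean] with n hn
  rw [hω n, Pi.smul_apply, smul_eq_mul, ← hZω n, hZ]
  exact mul_le_mul hn (div_le_urn_share hX01 hAbd ha hN hj n ω) (by positivity) (hc.le.trans hn)

theorem sup'_limsup_integral_nonneg [IsProbabilityMeasure μ] {d0 : ℕ} (h : d0 < d) {β : ℝ}
    (hAmeas : ∀ n j, Measurable (A n j))
    (hAbd : ∀ n, 1 ≤ n → ∀ j ∈ Finset.Icc 1 d, ∀ ω, 0 ≤ A n j ω ∧ A n j ω ≤ β) :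
    0 ≤ (Finset.Ioc d0 d).sup' (Finset.nonempty_Ioc.mpr h)
      fun j => limsup (fun n : ℕ => ∫ ω, A n j ω ∂μ) atTop :=
  Finset.le_sup'_of_le _ (Finset.right_mem_Ioc.2 h) <| limsup_nonneg_of_eventually_mem_Icc <|
    (eventually_ge_atTop 1).mono fun n hn =>
      integral_mem_Icc_of_forall_mem_Icc (hAmeas n d)
        (hAbd n hn d (Finset.right_mem_Icc.2 (by omega)))

end Urn

theorem stmt13_general
    {Ω : Type*} [MeasurableSpace Ω] {μ : Measure Ω} [IsProbabilityMeasure μ]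
    (d d0 : ℕ) (hd0d : d0 ≤ d)
    (X A : ℕ → ℕ → Ω → ℝ)
    (hXmeas : ∀ n j, Measurable (X n j)) (hAmeas : ∀ n j, Measurable (A n j))
    (β : ℝ)
    (hX01 : ∀ n, 1 ≤ n → ∀ j ∈ Finset.Icc 1 d, ∀ ω, X n j ω = 0 ∨ X n j ω = 1)
    (hAbd : ∀ n, 1 ≤ n → ∀ j ∈ Finset.Icc 1 d, ∀ ω, 0 ≤ A n j ω ∧ A n j ω ≤ β)
    (a : ℕ → ℝ) (ha : ∀ j ∈ Finset.Icc 1 d, 0 < a j)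
    (G : ℕ → MeasurableSpace Ω)
    (hG0 : G 0 = ⊥)
    (hG : ∀ n, 1 ≤ n → G n = ⨆ k ∈ Finset.Icc 1 n, ⨆ j ∈ Finset.Icc 1 d,
        (MeasurableSpace.comap (X k j) Real.measurableSpace ⊔
         MeasurableSpace.comap (A k j) Real.measurableSpace))
    (hindep : ∀ n, 1 ≤ n → ProbabilityTheory.Indep
        (⨆ j ∈ Finset.Icc 1 d, MeasurableSpace.comap (A n j) Real.measurableSpace)
        (G (n - 1) ⊔ ⨆ j ∈ Finset.Icc 1 d, MeasurableSpace.comap (X n j) Real.measurableSpace) μ)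
    (N : ℕ → ℕ → Ω → ℝ)
    (hN : ∀ n j ω, N n j ω = a j + ∑ k ∈ Finset.Icc 1 n, X k j ω * A k j ω)
    (S : ℕ → Ω → ℝ)
    (hS : ∀ n ω, S n ω = ∑ i ∈ Finset.Icc 1 d, N n i ω)
    (Z : ℕ → ℕ → Ω → ℝ)
    (hZ : ∀ n j ω, Z n j ω = N n j ω / S n ω)
    (hZcond : ∀ n, ∀ j ∈ Finset.Icc 1 d, Z n j =ᵐ[μ] μ[X (n + 1) j | G n])
    (lam0 m : ℝ)
    (hlam0_eq : d0 = d → lam0 = 0)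
    (hlam0_lt : ∀ h : d0 < d, lam0 = (Finset.Ioc d0 d).sup'
        (Finset.nonempty_Ioc.mpr h)
        (fun j => Filter.limsup (fun n : ℕ => ∫ ω, A n j ω ∂μ) Filter.atTop))
    (hEA : ∀ n, 1 ≤ n → ∀ j ∈ Finset.Icc 1 d0, ∫ ω, A n j ω ∂μ = ∫ ω, A n 1 ω ∂μ)
    (hm : Filter.Tendsto (fun n : ℕ => ∫ ω, A n 1 ω ∂μ) Filter.atTop (nhds m))
    (hmgt : lam0 < m) :
    ∀ j ∈ Finset.Icc 1 d0,
      ∀ᵐ ω ∂μ, Filter.Tendsto (fun n : ℕ => N n j ω) Filter.atTop Filter.atTop := by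
  intro j hj
  have hjd : j ∈ Finset.Icc 1 d := Finset.Icc_subset_Icc_right hd0d hj
  have hlam0 : 0 ≤ lam0 := by
    rcases hd0d.eq_or_lt with h | h
    · exact (hlam0_eq h).ge
    · exact (hlam0_lt h).symm ▸ sup'_limsup_integral_nonneg h hAmeas hAbd
  have hm0 : 0 < m := hlam0.trans_lt hmgt
  have hmean : ∀ᶠ n in atTop, m / 2 ≤ ∫ ω, A n j ω ∂μ := by
    filter_upwards [hm.eventually (eventually_ge_nhds (half_lt_self hm0)),
      eventually_ge_atTop 1] with n hn hn1
    rwa [hEA n hn1 j hj]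
  exact ae_tendsto_urn_count_atTop hXmeas hAmeas hX01 hAbd ha hG0 hG hindep hN
    (fun n i ω => by rw [hZ, hS]) hZcond hjd (half_pos hm0) hmean

theorem stmt13
    {Ω : Type*} [MeasurableSpace Ω] {μ : Measure Ω} [IsProbabilityMeasure μ]
    (d d0 : ℕ) (hd : 2 ≤ d) (hd01 : 1 ≤ d0) (hd0d : d0 ≤ d)
    (X A : ℕ → ℕ → Ω → ℝ)
    (hXmeas : ∀ n j, Measurable (X n j)) (hAmeas : ∀ n j, Measurable (A n j))
    (β : ℝ)
    (hX01 : ∀ n, 1 ≤ n → ∀ j ∈ Finset.Icc 1 d, ∀ ω, X n j ω = 0 ∨ X n j ω = 1)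
    (hXsum : ∀ n, 1 ≤ n → ∀ ω, ∑ j ∈ Finset.Icc 1 d, X n j ω = 1)
    (hAbd : ∀ n, 1 ≤ n → ∀ j ∈ Finset.Icc 1 d, ∀ ω, 0 ≤ A n j ω ∧ A n j ω ≤ β)
    (a : ℕ → ℝ) (ha : ∀ j ∈ Finset.Icc 1 d, 0 < a j)
    (G : ℕ → MeasurableSpace Ω)
    (hG0 : G 0 = ⊥)
    (hG : ∀ n, 1 ≤ n → G n = ⨆ k ∈ Finset.Icc 1 n, ⨆ j ∈ Finset.Icc 1 d,
        (MeasurableSpace.comap (X k j) Real.measurableSpace ⊔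
         MeasurableSpace.comap (A k j) Real.measurableSpace))
    (hindep : ∀ n, 1 ≤ n → ProbabilityTheory.Indep
        (⨆ j ∈ Finset.Icc 1 d, MeasurableSpace.comap (A n j) Real.measurableSpace)
        (G (n - 1) ⊔ ⨆ j ∈ Finset.Icc 1 d, MeasurableSpace.comap (X n j) Real.measurableSpace) μ)
    (N : ℕ → ℕ → Ω → ℝ)
    (hN : ∀ n j ω, N n j ω = a j + ∑ k ∈ Finset.Icc 1 n, X k j ω * A k j ω)
    (S Sstar : ℕ → Ω → ℝ)
    (hS : ∀ n ω, S n ω = ∑ i ∈ Finset.Icc 1 d, N n i ω)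
    (hSstar : ∀ n ω, Sstar n ω = ∑ i ∈ Finset.Icc 1 d0, N n i ω)
    (Z : ℕ → ℕ → Ω → ℝ)
    (hZ : ∀ n j ω, Z n j ω = N n j ω / S n ω)
    (hZcond : ∀ n, ∀ j ∈ Finset.Icc 1 d, Z n j =ᵐ[μ] μ[X (n + 1) j | G n])
    (lam0 m : ℝ)
    (hlam0_eq : d0 = d → lam0 = 0)
    (hlam0_lt : ∀ h : d0 < d, lam0 = (Finset.Ioc d0 d).sup'
        (Finset.nonempty_Ioc.mpr h)
        (fun j => Filter.limsup (fun n : ℕ => ∫ ω, A n j ω ∂μ) Filter.atTop))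
    (hEA : ∀ n, 1 ≤ n → ∀ j ∈ Finset.Icc 1 d0, ∫ ω, A n j ω ∂μ = ∫ ω, A n 1 ω ∂μ)
    (hm : Filter.Tendsto (fun n : ℕ => ∫ ω, A n 1 ω ∂μ) Filter.atTop (nhds m))
    (hmgt : lam0 < m)
    (q : ℕ → ℝ)
    (hq : ∀ j ∈ Finset.Icc 1 d0,
        Filter.Tendsto (fun n : ℕ => ∫ ω, (A n j ω) ^ 2 ∂μ) Filter.atTop (nhds (q j))) :
    ∀ j ∈ Finset.Icc 1 d0,
      ∀ᵐ ω ∂μ, Filter.Tendsto (fun n : ℕ => N n j ω) Filter.atTop Filter.atTop :=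
  stmt13_general d d0 hd0d X A hXmeas hAmeas β hX01 hAbd a ha G hG0 hG hindep N hN S hS Z hZ hZcond
    lam0 m hlam0_eq hlam0_lt hEA hm hmgt
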